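/- arXiv:1312.3043 — 6 statements merged into one kernel-verified Lean document; each statement's English description precedes it below -/
import Mathlib

section
/- Equality case of the log-sum inequality: for positive reals a_1,...,a_n and b_1,...,b_n, equality ∑_i a_i * log(a_i / b_i) = (∑_i a_i) * log((∑_i a_i) / (∑_i b_i)) holds if and only if the ratio a_i / b_i is constant in i. -/
/-!
Put `A = ∑ a i`, `B = ∑ b i`, weights `w i = b i / B` and points `p i = a i / b i`. Then
`∑ w i p i = A / B` and `∑ w i (p i log p i) = (∑ a i log (a i / b i)) / B`, so the two sides of
the log-sum inequality are `B` times the two sides of Jensen's inequality for the strictly convex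
function `x ↦ x log x`. Equality in Jensen's inequality forces every `p i` to equal the mean `A / B`.
-/

open Finset Real

namespace Real

variable {ι : Type*} {s : Finset ι} {a b : ι → ℝ}

lemma div_eq_sum_div_sum_of_forall_div_eq (hb : ∀ i ∈ s, 0 < b i) {c : ℝ}
    (hc : ∀ i ∈ s, a i / b i = c) : ∀ i ∈ s, a i / b i = (∑ i ∈ s, a i) / ∑ i ∈ s, b i := by
  intro i hi
  have hB : 0 < ∑ i ∈ s, b i := sum_pos hb ⟨i, hi⟩
  have hA : ∑ i ∈ s, a i = c * ∑ i ∈ s, b i := by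
    rw [mul_sum]
    exact sum_congr rfl fun j hj ↦ by rw [← hc j hj, div_mul_cancel₀ _ (hb j hj).ne']
  rw [hc i hi, hA, mul_div_cancel_right₀ _ hB.ne']

lemma sum_mul_log_div_eq_iff (ha : ∀ i ∈ s, 0 ≤ a i) (hb : ∀ i ∈ s, 0 < b i) :
    ∑ i ∈ s, a i * log (a i / b i) = (∑ i ∈ s, a i) * log ((∑ i ∈ s, a i) / ∑ i ∈ s, b i) ↔
      ∃ c, ∀ i ∈ s, a i / b i = c := by
  obtain rfl | hs := s.eq_empty_or_nonempty
  · simp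
  set A := ∑ i ∈ s, a i
  set B := ∑ i ∈ s, b i
  have hB : 0 < B := sum_pos hb hs
  have hweight : ∀ i ∈ s, b i / B * (a i / b i) = a i / B := fun i hi ↦ by
    rw [div_mul_div_comm, mul_comm (b i), mul_div_mul_right _ _ (hb i hi).ne']
  have hmean : ∑ i ∈ s, (b i / B) • (a i / b i) = A / B := by
    simp only [smul_eq_mul]
    exact (sum_congr rfl hweight).trans (sum_div ..).symm
  have hmean_f : ∑ i ∈ s, (b i / B) • (a i / b i * log (a i / b i)) =
      (∑ i ∈ s, a i * log (a i / b i)) / B := by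
    simp only [smul_eq_mul, sum_div]
    exact sum_congr rfl fun i hi ↦ by rw [← mul_assoc, hweight i hi, div_mul_eq_mul_div]
  have jensen := strictConvexOn_mul_log.map_sum_eq_iff (t := s) (w := fun i ↦ b i / B)
    (p := fun i ↦ a i / b i) (fun i hi ↦ div_pos (hb i hi) hB)
    (by rw [← sum_div, div_self hB.ne'])
    (fun i hi ↦ Set.mem_Ici.2 (div_nonneg (ha i hi) (hb i hi).le))
  rw [hmean, hmean_f, div_mul_eq_mul_div, div_left_inj' hB.ne'] at jensen
  rw [eq_comm, jensen]
  exact ⟨fun h ↦ ⟨A / B, h⟩, fun ⟨c, hc⟩ ↦ div_eq_sum_div_sum_of_forall_div_eq hb hc⟩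

end Real

theorem stmt_2_general (n : ℕ) (a b : Fin n → ℝ)
    (ha : ∀ i, 0 < a i) (hb : ∀ i, 0 < b i) :
    (∑ i, a i * Real.log (a i / b i)) =
      (∑ i, a i) * Real.log ((∑ i, a i) / (∑ i, b i)) ↔
    ∃ c : ℝ, ∀ i, a i / b i = c := by
  simpa using Real.sum_mul_log_div_eq_iff (s := univ) (fun i _ ↦ (ha i).le) (fun i _ ↦ hb i)

theorem stmt_2 (n : ℕ) (hn : 1 ≤ n) (a b : Fin n → ℝ)
    (ha : ∀ i, 0 < a i) (hb : ∀ i, 0 < b i) :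
    (∑ i, a i * Real.log (a i / b i)) =
      (∑ i, a i) * Real.log ((∑ i, a i) / (∑ i, b i)) ↔
    ∃ c : ℝ, ∀ i, a i / b i = c :=
  stmt_2_general n a b ha hb
end

section
/- If a finite directed graph admits a conservative flow that is strictly positive on every edge, then the graph is weakly reversible: every edge lies on a directed cycle (equivalently, every connected component of the graph is strongly connected). -/
/-!
Let `S` be the set of vertices reachable from the head `v` of an edge `(u, v)`. No edge leaves `S`,
so the flow out of `S` is carried by edges inside `S`, while the flow into `S` is carried by those
edges together with every edge entering `S` from outside. Kirchhoff's law makes the two totals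
equal, and the flow is positive on every edge, so no edge enters `S` from outside; in particular
`u ∈ S`, i.e. `u` is reachable from `v`.
-/

section Flow

variable {V : Type*} [DecidableEq V] (E : Finset (V × V)) (f : V × V → ℝ)

theorem sum_filter_snd_mem_eq_sum_filter_fst_mem
    (hcons : ∀ v : V,
      ∑ e ∈ E.filter (fun e => e.2 = v), f e = ∑ e ∈ E.filter (fun e => e.1 = v), f e)
    (S : Finset V) :
    ∑ e ∈ E.filter (fun e => e.2 ∈ S), f e = ∑ e ∈ E.filter (fun e => e.1 ∈ S), f e := by
  rw [← Finset.sum_fiberwise_eq_sum_filter E S Prod.snd f,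
    ← Finset.sum_fiberwise_eq_sum_filter E S Prod.fst f]
  exact Finset.sum_congr rfl fun v _ => hcons v

theorem fst_mem_of_snd_mem_of_forward_closed
    (hpos : ∀ e ∈ E, 0 < f e)
    (hcons : ∀ v : V,
      ∑ e ∈ E.filter (fun e => e.2 = v), f e = ∑ e ∈ E.filter (fun e => e.1 = v), f e)
    {S : Finset V} (hS : ∀ e ∈ E, e.1 ∈ S → e.2 ∈ S) :
    ∀ e ∈ E, e.2 ∈ S → e.1 ∈ S := by
  intro e he heS
  by_contra heS'
  have hsub : E.filter (fun e => e.1 ∈ S) ⊆ E.filter (fun e => e.2 ∈ S) :=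
    fun e' h => by
      rw [Finset.mem_filter] at h ⊢
      exact ⟨h.1, hS e' h.1 h.2⟩
  have hlt : ∑ e ∈ E.filter (fun e => e.1 ∈ S), f e < ∑ e ∈ E.filter (fun e => e.2 ∈ S), f e :=
    Finset.sum_lt_sum_of_subset hsub (Finset.mem_filter.2 ⟨he, heS⟩)
      (fun h => heS' (Finset.mem_filter.1 h).2) (hpos e he)
      fun e' he' _ => (hpos e' (Finset.mem_filter.1 he').1).le
  exact hlt.ne' (sum_filter_snd_mem_eq_sum_filter_fst_mem E f hcons S)

end Flow

theorem stmt_5_general {V : Type*} [DecidableEq V]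
    (E : Finset (V × V)) (f : V × V → ℝ)
    (hpos : ∀ e ∈ E, 0 < f e)
    (hcons : ∀ v : V,
      ∑ e ∈ E.filter (fun e => e.2 = v), f e = ∑ e ∈ E.filter (fun e => e.1 = v), f e) :
    ∀ e ∈ E, Relation.ReflTransGen (fun u v => (u, v) ∈ E) e.2 e.1 := by
  classical
  intro e he
  let S := (E.image Prod.snd).filter (Relation.ReflTransGen (fun u v => (u, v) ∈ E) e.2)
  have hS : ∀ e' ∈ E, e'.1 ∈ S → e'.2 ∈ S := fun e' he' h' =>
    Finset.mem_filter.2 ⟨Finset.mem_image_of_mem _ he', (Finset.mem_filter.1 h').2.tail he'⟩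
  have heS : e.2 ∈ S := Finset.mem_filter.2 ⟨Finset.mem_image_of_mem _ he, .refl⟩
  exact (Finset.mem_filter.1 (fst_mem_of_snd_mem_of_forward_closed E f hpos hcons hS e he heS)).2

theorem stmt_5 {V : Type*} [Fintype V] [DecidableEq V]
    (E : Finset (V × V)) (f : V × V → ℝ)
    (hpos : ∀ e ∈ E, 0 < f e)
    (hcons : ∀ v : V,
      ∑ e ∈ E.filter (fun e => e.2 = v), f e = ∑ e ∈ E.filter (fun e => e.1 = v), f e) :
    ∀ e ∈ E, Relation.ReflTransGen (fun u v => (u, v) ∈ E) e.2 e.1 :=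
  stmt_5_general E f hpos hcons
end

section
/- Every complex-balanced mass-action system is weakly reversible: if there exists α ∈ ℝ_{>0}^S such that for every complex y, ∑_{y'→y ∈ R} k_{y'→y} α^{y'} = ∑_{y→y'' ∈ R} k_{y→y''} α^{y}, then for every reaction y→y' ∈ R there is a directed path in the reaction graph from y' back to y. -/
/-!
Summing the balance condition over a finite set `A` of complexes shows that the total rate of
the reactions with target in `A` equals that of the reactions with source in `A`. If `A` is the
set of complexes reachable from `y'`, every reaction with source in `A` also has target in `A`;
as all rates are positive, equality of the totals forces every reaction with target in `A` to
have its source in `A` as well. Applied to `y → y'`, this puts `y` in `A`.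
-/

open Finset

section Circulation

variable {V M : Type*} [DecidableEq V] [AddCommMonoid M] {R : Finset (V × V)} {f : V × V → M}

theorem sum_filter_snd_mem_eq_sum_filter_fst_mem_s6
    (hbal : ∀ v, ∑ r ∈ R with r.2 = v, f r = ∑ r ∈ R with r.1 = v, f r) (A : Finset V) :
    ∑ r ∈ R with r.2 ∈ A, f r = ∑ r ∈ R with r.1 ∈ A, f r := by
  rw [← sum_fiberwise_eq_sum_filter, ← sum_fiberwise_eq_sum_filter]
  exact sum_congr rfl fun v _ => hbal v

theorem fst_mem_of_snd_mem_of_forall_fst_mem_imp [PartialOrder M] [IsOrderedCancelAddMonoid M]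
    (hf : ∀ r ∈ R, 0 < f r)
    (hbal : ∀ v, ∑ r ∈ R with r.2 = v, f r = ∑ r ∈ R with r.1 = v, f r) {A : Finset V}
    (hA : ∀ r ∈ R, r.1 ∈ A → r.2 ∈ A) {r : V × V} (hr : r ∈ R) (hr₂ : r.2 ∈ A) : r.1 ∈ A := by
  by_contra hr₁
  have hsub : {e ∈ R | e.1 ∈ A} ⊆ {e ∈ R | e.2 ∈ A} := fun e he =>
    mem_filter.2 ⟨(mem_filter.1 he).1, hA e (mem_filter.1 he).1 (mem_filter.1 he).2⟩
  have hlt : ∑ e ∈ R with e.1 ∈ A, f e < ∑ e ∈ R with e.2 ∈ A, f e :=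
    sum_lt_sum_of_subset hsub (mem_filter.2 ⟨hr, hr₂⟩) (fun h => hr₁ (mem_filter.1 h).2) (hf r hr)
      fun e he _ => (hf e (mem_filter.1 he).1).le
  exact hlt.ne (sum_filter_snd_mem_eq_sum_filter_fst_mem_s6 hbal A).symm

theorem reflTransGen_snd_fst_of_balanced [PartialOrder M] [IsOrderedCancelAddMonoid M]
    (hf : ∀ r ∈ R, 0 < f r)
    (hbal : ∀ v, ∑ r ∈ R with r.2 = v, f r = ∑ r ∈ R with r.1 = v, f r) {r : V × V}
    (hr : r ∈ R) : Relation.ReflTransGen (fun u v => (u, v) ∈ R) r.2 r.1 := by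
  classical
  let A : Finset V := {v ∈ R.image Prod.snd | Relation.ReflTransGen (fun u v => (u, v) ∈ R) r.2 v}
  have hA : ∀ e ∈ R, e.1 ∈ A → e.2 ∈ A := fun e he he₁ =>
    mem_filter.2 ⟨mem_image_of_mem _ he, (mem_filter.1 he₁).2.tail he⟩
  exact (mem_filter.1 <| fst_mem_of_snd_mem_of_forall_fst_mem_imp hf hbal hA hr
    (mem_filter.2 ⟨mem_image_of_mem _ hr, .refl⟩)).2

end Circulation

theorem stmt_6_general {S : Type*} [Fintype S]
    (R : Finset ((S → ℕ) × (S → ℕ)))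
    (k : (S → ℕ) × (S → ℕ) → ℝ) (hk : ∀ r ∈ R, 0 < k r)
    (α : S → ℝ) (hα : ∀ i, 0 < α i)
    (hbal : ∀ y : S → ℕ,
      ∑ r ∈ R.filter (fun r => r.2 = y), k r * ∏ i, α i ^ r.1 i =
        ∑ r ∈ R.filter (fun r => r.1 = y), k r * ∏ i, α i ^ y i) :
    ∀ r ∈ R, Relation.ReflTransGen (fun y y' => (y, y') ∈ R) r.2 r.1 := by
  intro r hr
  refine reflTransGen_snd_fst_of_balanced (f := fun r => k r * ∏ i, α i ^ r.1 i)
    (fun e he => mul_pos (hk e he) (prod_pos fun i _ => pow_pos (hα i) _)) (fun y => ?_) hr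
  rw [hbal y]
  exact sum_congr rfl fun e he => by rw [(mem_filter.1 he).2]

theorem stmt_6 {S : Type*} [Fintype S] [DecidableEq S]
    (R : Finset ((S → ℕ) × (S → ℕ)))
    (k : (S → ℕ) × (S → ℕ) → ℝ) (hk : ∀ r ∈ R, 0 < k r)
    (α : S → ℝ) (hα : ∀ i, 0 < α i)
    (hbal : ∀ y : S → ℕ,
      ∑ r ∈ R.filter (fun r => r.2 = y), k r * ∏ i, α i ^ r.1 i =
        ∑ r ∈ R.filter (fun r => r.1 = y), k r * ∏ i, α i ^ y i) :
    ∀ r ∈ R, Relation.ReflTransGen (fun y y' => (y, y') ∈ R) r.2 r.1 :=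
  stmt_6_general R k hk α hα hbal
end

section
/- Flow decomposition: if f is a strictly positive conservative flow on a finite strongly connected directed graph G, then there exist simple directed cycles C_1,...,C_n in G and positive constants f^1,...,f^n such that for every edge e of G, f(e) = ∑_{i : e ∈ C_i} f^i. -/
/-!
Induction on the support of the flow. Where a positive circulation enters a vertex it must also
leave it, so a successor map on the heads of edges exists; a periodic orbit of it is a simple
cycle. Subtracting the minimum of `f` along the cycle times the cycle's indicator leaves a
nonnegative circulation vanishing on at least one more edge: decompose its support by induction
and add the cycle back.
-/

/-- The directed edges of the cycle through the vertices of `L` (in order,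
wrapping around at the end). -/
def cycleEdges {V : Type*} (L : List V) : List (V × V) := L.zip (L.rotate 1)

section CycleDecomposition

open Finset Function

variable {V : Type*}

theorem Function.exists_mem_periodicPts [Finite V] [Nonempty V] (g : V → V) :
    ∃ x, x ∈ periodicPts g := by
  obtain ⟨i, j, hij, heq⟩ := Finite.exists_ne_map_eq_of_infinite (g^[·] (Classical.arbitrary V))
  wlog hlt : i < j generalizing i j
  · exact this j i hij.symm heq.symm (hij.symm.lt_of_le (not_lt.mp hlt))
  refine ⟨g^[i] (Classical.arbitrary V), mk_mem_periodicPts (Nat.sub_pos_of_lt hlt) ?_⟩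
  rw [IsPeriodicPt, IsFixedPt, ← iterate_add_apply, Nat.sub_add_cancel hlt.le]
  exact heq.symm

theorem Function.Periodic.cycleEdges_map_range {f : ℕ → V} {n : ℕ} (hf : Periodic f n) :
    cycleEdges ((List.range n).map f) = (List.range n).map fun k => (f k, f (k + 1)) := by
  have hrot : ((List.range n).map f).rotate 1 = (List.range n).map (fun k => f (k + 1)) := by
    refine List.ext_getElem (by simp) fun k hk _ => ?_
    simp [List.getElem_rotate, hf.map_mod_nat]
  rw [cycleEdges, hrot, List.zip_map']

theorem map_fst_cycleEdges (L : List V) : (cycleEdges L).map Prod.fst = L :=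
  List.map_fst_zip (by simp)

theorem map_snd_cycleEdges (L : List V) : (cycleEdges L).map Prod.snd = L.rotate 1 :=
  List.map_snd_zip (by simp)

theorem nodup_cycleEdges {L : List V} (hL : L.Nodup) : (cycleEdges L).Nodup :=
  .of_map Prod.fst (by rwa [map_fst_cycleEdges])

theorem cycleEdges_ne_nil {L : List V} (hL : L ≠ []) : cycleEdges L ≠ [] := fun h =>
  hL (by rw [← map_fst_cycleEdges L, h, List.map_nil])

theorem countP_fst_cycleEdges_eq_countP_snd (L : List V) (p : V → Bool) :
    (cycleEdges L).countP (p ·.1) = (cycleEdges L).countP (p ·.2) := by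
  have hfst := (List.countP_map (p := p) (f := Prod.fst) (l := cycleEdges L)).symm
  have hsnd := (List.countP_map (p := p) (f := Prod.snd) (l := cycleEdges L)).symm
  rw [map_fst_cycleEdges] at hfst
  rw [map_snd_cycleEdges, (List.rotate_perm L 1).countP_eq] at hsnd
  exact hfst.trans hsnd.symm

theorem card_filter_fst_cycleEdges_eq_card_filter_snd [DecidableEq V] {L : List V}
    (hL : L.Nodup) (v : V) :
    #((cycleEdges L).toFinset.filter (·.1 = v)) = #((cycleEdges L).toFinset.filter (·.2 = v)) := by
  have hnd := nodup_cycleEdges hL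
  have key := countP_fst_cycleEdges_eq_countP_snd L (· = v)
  simp only [List.countP_eq_length_filter, ← List.toFinset_card_of_nodup (hnd.filter _),
    List.toFinset_filter] at key
  simpa using key

structure IsSimpleCycle (E : Finset (V × V)) (L : List V) : Prop where
  nodup : L.Nodup
  ne_nil : L ≠ []
  edge_mem : ∀ e ∈ cycleEdges L, e ∈ E

theorem IsSimpleCycle.mono {E E' : Finset (V × V)} {L : List V} (hL : IsSimpleCycle E' L)
    (hE : E' ⊆ E) : IsSimpleCycle E L :=
  ⟨hL.nodup, hL.ne_nil, fun e he => hE (hL.edge_mem e he)⟩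

theorem exists_isSimpleCycle [DecidableEq V] {E : Finset (V × V)} (hE : E.Nonempty)
    (hcont : ∀ e ∈ E, ∃ w, (e.2, w) ∈ E) : ∃ L, IsSimpleCycle E L := by
  let S := E.image Prod.snd
  have hS : ∀ v ∈ S, ∃ w ∈ S, (v, w) ∈ E := by
    simp only [S, mem_image]
    rintro _ ⟨e, he, rfl⟩
    obtain ⟨w, hw⟩ := hcont e he
    exact ⟨w, ⟨_, hw, rfl⟩, hw⟩
  choose! g hgS hgE using hS
  let g' : S → S := fun v => ⟨g v, hgS v v.2⟩
  have : Nonempty S := (hE.image _).to_subtype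
  obtain ⟨x, hx⟩ := exists_mem_periodicPts g'
  let c : ℕ → V := fun k => g'^[k] x
  have hc : Periodic c (minimalPeriod g' x) := fun k => by
    simp only [c, iterate_add_apply, iterate_minimalPeriod]
  refine ⟨(List.range (minimalPeriod g' x)).map c, ?_, ?_, ?_⟩
  · refine (List.nodup_map_iff_inj_on List.nodup_range).mpr fun a ha b hb hab => ?_
    exact iterate_injOn_Iio_minimalPeriod (by simpa using ha) (by simpa using hb)
      (Subtype.val_injective hab)
  · simpa using (minimalPeriod_pos_of_mem_periodicPts hx).ne'
  · rw [hc.cycleEdges_map_range]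
    simp only [List.mem_map, List.mem_range]
    rintro _ ⟨k, -, rfl⟩
    simp only [c, iterate_succ_apply']
    exact hgE _ (g'^[k] x).2

section Circulation

variable [DecidableEq V]

def IsCirculation (E : Finset (V × V)) (f : V × V → ℝ) : Prop :=
  ∀ v : V, ∑ e ∈ E.filter (fun e => e.2 = v), f e = ∑ e ∈ E.filter (fun e => e.1 = v), f e

theorem IsCirculation.sub {E : Finset (V × V)} {f g : V × V → ℝ} (hf : IsCirculation E f)
    (hg : IsCirculation E g) : IsCirculation E (f - g) := fun v => by
  simp only [Pi.sub_apply, sum_sub_distrib, hf v, hg v]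

theorem IsCirculation.filter_ne_zero {E : Finset (V × V)} {f : V × V → ℝ}
    (hf : IsCirculation E f) : IsCirculation (E.filter (f · ≠ 0)) f := fun v => by
  simp only [filter_comm (f · ≠ 0), sum_filter_ne_zero, hf v]

theorem IsSimpleCycle.isCirculation {E : Finset (V × V)} {L : List V} (hL : IsSimpleCycle E L)
    (m : ℝ) : IsCirculation E (fun e => if e ∈ cycleEdges L then m else 0) := fun v => by
  have hsub : (cycleEdges L).toFinset ⊆ E := fun e he => hL.edge_mem e (List.mem_toFinset.mp he)
  simp only [← List.mem_toFinset (l := cycleEdges L), sum_ite_mem, filter_inter,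
    inter_eq_right.mpr hsub, sum_const, card_filter_fst_cycleEdges_eq_card_filter_snd hL.nodup]

theorem IsCirculation.exists_edge_from_head {E : Finset (V × V)} {f : V × V → ℝ}
    (hf : IsCirculation E f) (hpos : ∀ e ∈ E, 0 < f e) {e : V × V} (he : e ∈ E) :
    ∃ w, (e.2, w) ∈ E := by
  have hin : 0 < ∑ e' ∈ E.filter (fun e' => e'.2 = e.2), f e' :=
    sum_pos (fun e' he' => hpos e' (mem_filter.mp he').1) ⟨e, mem_filter.mpr ⟨he, rfl⟩⟩
  rw [hf e.2] at hin
  obtain ⟨e', he'⟩ := nonempty_of_sum_ne_zero hin.ne'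
  obtain ⟨he'E, hstart⟩ := mem_filter.mp he'
  exact ⟨e'.2, by rw [← hstart]; exact he'E⟩

def HasCycleDecomposition (E : Finset (V × V)) (f : V × V → ℝ) : Prop :=
  ∃ (n : ℕ) (C : Fin n → List V) (w : Fin n → ℝ), (∀ i, IsSimpleCycle E (C i)) ∧ (∀ i, 0 < w i) ∧
    ∀ e ∈ E, f e = ∑ i ∈ univ.filter (fun i => e ∈ cycleEdges (C i)), w i

theorem hasCycleDecomposition_empty (f : V × V → ℝ) : HasCycleDecomposition ∅ f :=
  ⟨0, Fin.elim0, Fin.elim0, nofun, nofun, by simp⟩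

theorem HasCycleDecomposition.of_subset {E E' : Finset (V × V)} {f : V × V → ℝ}
    (h : HasCycleDecomposition E' f) (hE : E' ⊆ E) (hf : ∀ e ∈ E, e ∉ E' → f e = 0) :
    HasCycleDecomposition E f := by
  obtain ⟨n, C, w, hC, hw, hsum⟩ := h
  refine ⟨n, C, w, fun i => (hC i).mono hE, hw, fun e he => ?_⟩
  by_cases he' : e ∈ E'
  · exact hsum e he'
  · rw [hf e he he', filter_false_of_mem fun i _ hi => he' ((hC i).edge_mem e hi), sum_empty]

theorem HasCycleDecomposition.add_cycle {E : Finset (V × V)} {f g : V × V → ℝ} {L : List V}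
    {m : ℝ} (h : HasCycleDecomposition E g) (hL : IsSimpleCycle E L) (hm : 0 < m)
    (hf : ∀ e ∈ E, f e = g e + if e ∈ cycleEdges L then m else 0) :
    HasCycleDecomposition E f := by
  obtain ⟨n, C, w, hC, hw, hsum⟩ := h
  refine ⟨n + 1, Fin.cons L C, Fin.cons m w, Fin.cases hL hC, Fin.cases hm hw, fun e he => ?_⟩
  rw [hf e he, hsum e he, sum_filter, sum_filter, Fin.sum_univ_succ]
  simp only [Fin.cons_zero, Fin.cons_succ]
  ring

theorem IsCirculation.hasCycleDecomposition {E : Finset (V × V)}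
    {f : V × V → ℝ} (hf : IsCirculation E f) (hpos : ∀ e ∈ E, 0 < f e) :
    HasCycleDecomposition E f := by
  induction E using Finset.strongInduction generalizing f with
  | H E ih =>
  obtain rfl | hE := E.eq_empty_or_nonempty
  · exact hasCycleDecomposition_empty f
  obtain ⟨L, hL⟩ := exists_isSimpleCycle hE fun e he => hf.exists_edge_from_head hpos he
  obtain ⟨e₀, he₀, hmin⟩ := (cycleEdges L).toFinset.exists_min_image f
    ((List.toFinset_nonempty_iff _).mpr (cycleEdges_ne_nil hL.ne_nil))
  rw [List.mem_toFinset] at he₀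
  let c : V × V → ℝ := fun e => if e ∈ cycleEdges L then f e₀ else 0
  have hres : ∀ e ∈ E, 0 ≤ (f - c) e := by
    intro e he
    simp only [c, Pi.sub_apply]
    split_ifs with h
    · exact sub_nonneg.mpr (hmin e (List.mem_toFinset.mpr h))
    · simpa using (hpos e he).le
  have hlt : E.filter ((f - c) · ≠ 0) ⊂ E :=
    filter_ssubset.mpr ⟨e₀, hL.edge_mem e₀ he₀, by simp [c, he₀]⟩
  have hdec := ih _ hlt ((hf.sub (hL.isCirculation _)).filter_ne_zero)
    fun e he => (hres e (filter_subset _ _ he)).lt_of_ne' (mem_filter.mp he).2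
  refine (hdec.of_subset (filter_subset _ _) fun e he he' => ?_).add_cycle hL
    (hpos e₀ (hL.edge_mem e₀ he₀)) fun e _ => (sub_add_cancel _ _).symm
  simpa [he] using he'

end Circulation

end CycleDecomposition

theorem stmt_7_general {V : Type*} [DecidableEq V]
    (E : Finset (V × V)) (f : V × V → ℝ)
    (hpos : ∀ e ∈ E, 0 < f e)
    (hcons : ∀ v : V,
      ∑ e ∈ E.filter (fun e => e.2 = v), f e = ∑ e ∈ E.filter (fun e => e.1 = v), f e) :
    ∃ (n : ℕ) (C : Fin n → List V) (w : Fin n → ℝ),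
      (∀ i, (C i).Nodup ∧ C i ≠ [] ∧ ∀ e ∈ cycleEdges (C i), e ∈ E) ∧
      (∀ i, 0 < w i) ∧
      ∀ e ∈ E, f e = ∑ i ∈ Finset.univ.filter (fun i => e ∈ cycleEdges (C i)), w i := by
  obtain ⟨n, C, w, hC, hw, hsum⟩ := IsCirculation.hasCycleDecomposition hcons hpos
  exact ⟨n, C, w, fun i => ⟨(hC i).nodup, (hC i).ne_nil, (hC i).edge_mem⟩, hw, hsum⟩

theorem stmt_7 {V : Type*} [Fintype V] [DecidableEq V]
    (E : Finset (V × V)) (f : V × V → ℝ)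
    (hpos : ∀ e ∈ E, 0 < f e)
    (hcons : ∀ v : V,
      ∑ e ∈ E.filter (fun e => e.2 = v), f e = ∑ e ∈ E.filter (fun e => e.1 = v), f e)
    (hstrong : ∀ u v : V, Relation.ReflTransGen (fun a b => (a, b) ∈ E) u v) :
    ∃ (n : ℕ) (C : Fin n → List V) (w : Fin n → ℝ),
      (∀ i, (C i).Nodup ∧ C i ≠ [] ∧ ∀ e ∈ cycleEdges (C i), e ∈ E) ∧
      (∀ i, 0 < w i) ∧
      ∀ e ∈ E, f e = ∑ i ∈ Finset.univ.filter (fun i => e ∈ cycleEdges (C i)), w i :=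
  stmt_7_general E f hpos hcons
end

section
/- Cycle Lyapunov lemma: suppose the reaction graph is a single directed m-cycle y_1 → y_2 → ... → y_m → y_1 (distinct complexes, m ≥ 2) with rates k_{y_j→y_{j+1}} > 0, and α ∈ ℝ_{>0}^S is such that the flow f_α(y_j→y_{j+1}) = k_{y_j→y_{j+1}} α^{y_j} is constant in j. Then for all x ∈ ℝ_{>0}^S, ⟨log(x/α), ∑_{j=1}^m k_{y_j→y_{j+1}} (y_{j+1} − y_j) x^{y_j}⟩ ≤ 0, with equality if and only if k_{y_j→y_{j+1}} x^{y_j} is constant in j. -/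
/-!
Write `u j = ⟨y_j, log (x/α)⟩` and let `c` be the common flow `k_j α^{y_j}`. Then
`k_j x^{y_j} = c e^{u_j}`, so the pairing equals `c ∑_j e^{u_j} (u_{j+1} - u_j)`. Convexity of `exp`
bounds each term by `e^{u_{j+1}} - e^{u_j}`, with equality iff `u_{j+1} = u_j`, and these bounds
telescope to `0` around the cycle. Equality therefore forces `u` to be constant along the cycle,
which is the constancy of `k_j x^{y_j}`.
-/

open Finset Real

namespace Real

theorem exp_mul_sub_le_exp_sub_exp (a b : ℝ) : exp a * (b - a) ≤ exp b - exp a := by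
  have h : exp b = exp a * exp (b - a) := by rw [← exp_add, add_sub_cancel]
  nlinarith [add_one_le_exp (b - a), exp_pos a]

theorem exp_mul_sub_eq_exp_sub_exp_iff {a b : ℝ} : exp a * (b - a) = exp b - exp a ↔ b = a := by
  refine ⟨fun heq => ?_, fun hba => by simp [hba]⟩
  by_contra hne
  have h : exp b = exp a * exp (b - a) := by rw [← exp_add, add_sub_cancel]
  nlinarith [add_one_lt_exp (sub_ne_zero.mpr hne), exp_pos a]

section Perm

variable {ι : Type*} [Fintype ι] (σ : Equiv.Perm ι) (u : ι → ℝ)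

theorem sum_exp_mul_sub_perm_eq :
    ∑ j, exp (u j) * (u (σ j) - u j)
      = ∑ j, (exp (u j) * (u (σ j) - u j) - (exp (u (σ j)) - exp (u j))) := by
  have htelescope : ∑ j, (exp (u (σ j)) - exp (u j)) = 0 := by
    rw [sum_sub_distrib, Equiv.sum_comp σ (fun j => exp (u j)), sub_self]
  rw [sum_sub_distrib _ (fun j => exp (u (σ j)) - exp (u j)), htelescope, sub_zero]

theorem sum_exp_mul_sub_perm_nonpos : ∑ j, exp (u j) * (u (σ j) - u j) ≤ 0 := by
  rw [sum_exp_mul_sub_perm_eq]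
  exact sum_nonpos fun j _ => sub_nonpos.mpr (exp_mul_sub_le_exp_sub_exp _ _)

theorem sum_exp_mul_sub_perm_eq_zero_iff :
    ∑ j, exp (u j) * (u (σ j) - u j) = 0 ↔ ∀ j, u (σ j) = u j := by
  rw [sum_exp_mul_sub_perm_eq,
    sum_eq_zero_iff_of_nonpos fun j _ => sub_nonpos.mpr (exp_mul_sub_le_exp_sub_exp _ _)]
  simp only [mem_univ, true_implies, sub_eq_zero, exp_mul_sub_eq_exp_sub_exp_iff]

end Perm

theorem prod_pow_eq_prod_pow_mul_exp {S : Type*} [Fintype S] {x α : S → ℝ}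
    (hx : ∀ i, 0 < x i) (hα : ∀ i, 0 < α i) (n : S → ℕ) :
    ∏ i, x i ^ n i = (∏ i, α i ^ n i) * exp (∑ i, (n i : ℝ) * log (x i / α i)) := by
  rw [exp_sum, ← prod_mul_distrib]
  refine prod_congr rfl fun i _ => ?_
  rw [exp_nat_mul, exp_log (div_pos (hx i) (hα i)), div_pow,
    mul_div_cancel₀ _ (pow_ne_zero _ (hα i).ne')]

end Real

theorem Fin.forall_apply_add_one_eq_iff {m : ℕ} [NeZero m] {β : Type*} (u : Fin m → β) :
    (∀ j, u (j + 1) = u j) ↔ ∀ j j', u j = u j' := by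
  refine ⟨fun h => ?_, fun h j => h _ _⟩
  obtain ⟨n, rfl⟩ := Nat.exists_eq_succ_of_ne_zero (NeZero.ne m)
  have hzero : ∀ j : Fin (n + 1), u j = u 0 :=
    Fin.induction rfl fun i ih => by rw [← Fin.coeSucc_eq_succ, h, ih]
  exact fun j j' => (hzero j).trans (hzero j').symm

theorem sum_mul_sum_mul_sub_mul {S ι : Type*} [Fintype S] [Fintype ι]
    (L : S → ℝ) (k p : ι → ℝ) (a b : ι → S → ℝ) :
    ∑ i, L i * ∑ j, k j * (b j i - a j i) * p j
      = ∑ j, k j * p j * (∑ i, b j i * L i - ∑ i, a j i * L i) := by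
  simp only [mul_sum, ← sum_sub_distrib]
  rw [sum_comm]
  exact sum_congr rfl fun j _ => sum_congr rfl fun i _ => by ring

theorem stmt_12_general {S : Type*} [Fintype S]
    (m : ℕ) [NeZero m]
    (y : Fin m → (S → ℕ))
    (k : Fin m → ℝ) (hk : ∀ j, 0 < k j)
    (α : S → ℝ) (hα : ∀ i, 0 < α i)
    (hconst : ∀ j j' : Fin m, k j * ∏ i, α i ^ y j i = k j' * ∏ i, α i ^ y j' i)
    (x : S → ℝ) (hx : ∀ i, 0 < x i) :
    (∑ i, Real.log (x i / α i) *
        (∑ j, k j * ((y (j + 1) i : ℝ) - (y j i : ℝ)) * ∏ s, x s ^ y j s)) ≤ 0 ∧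
    ((∑ i, Real.log (x i / α i) *
        (∑ j, k j * ((y (j + 1) i : ℝ) - (y j i : ℝ)) * ∏ s, x s ^ y j s)) = 0 ↔
      ∀ j j' : Fin m, k j * ∏ s, x s ^ y j s = k j' * ∏ s, x s ^ y j' s) := by
  set u : Fin m → ℝ := fun j => ∑ i, (y j i : ℝ) * log (x i / α i)
  set c : ℝ := k 0 * ∏ i, α i ^ y 0 i
  have hc : 0 < c := mul_pos (hk 0) (prod_pos fun i _ => pow_pos (hα i) _)
  have hflow : ∀ j, k j * ∏ s, x s ^ y j s = c * exp (u j) := fun j => by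
    rw [prod_pow_eq_prod_pow_mul_exp hx hα, ← mul_assoc, hconst j 0]
  have hpairing : (∑ i, log (x i / α i) *
      (∑ j, k j * ((y (j + 1) i : ℝ) - (y j i : ℝ)) * ∏ s, x s ^ y j s))
        = c * ∑ j, exp (u j) * (u (Equiv.addRight 1 j) - u j) := by
    rw [sum_mul_sum_mul_sub_mul, mul_sum]
    exact sum_congr rfl fun j _ => by rw [hflow j]; simp only [u, Equiv.coe_addRight]; ring
  rw [hpairing]
  refine ⟨mul_nonpos_of_nonneg_of_nonpos hc.le (sum_exp_mul_sub_perm_nonpos _ u), ?_⟩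
  simp only [hflow, mul_right_inj' hc.ne', exp_eq_exp, mul_eq_zero, hc.ne', false_or]
  rw [sum_exp_mul_sub_perm_eq_zero_iff]
  exact Fin.forall_apply_add_one_eq_iff u

theorem stmt_12 {S : Type*} [Fintype S]
    (m : ℕ) [NeZero m] (hm : 2 ≤ m)
    (y : Fin m → (S → ℕ)) (hy : Function.Injective y)
    (k : Fin m → ℝ) (hk : ∀ j, 0 < k j)
    (α : S → ℝ) (hα : ∀ i, 0 < α i)
    (hconst : ∀ j j' : Fin m, k j * ∏ i, α i ^ y j i = k j' * ∏ i, α i ^ y j' i)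
    (x : S → ℝ) (hx : ∀ i, 0 < x i) :
    (∑ i, Real.log (x i / α i) *
        (∑ j, k j * ((y (j + 1) i : ℝ) - (y j i : ℝ)) * ∏ s, x s ^ y j s)) ≤ 0 ∧
    ((∑ i, Real.log (x i / α i) *
        (∑ j, k j * ((y (j + 1) i : ℝ) - (y j i : ℝ)) * ∏ s, x s ^ y j s)) = 0 ↔
      ∀ j j' : Fin m, k j * ∏ s, x s ^ y j s = k j' * ∏ s, x s ^ y j' s) :=
  stmt_12_general m y k hk α hα hconst x hx
end

section
/- For an m-cycle reaction network with constant complex-balanced flow f_α, the derivative expression factors as ⟨log(x/α), ∑_{j=1}^m k_{y_j→y_{j+1}}(y_{j+1}−y_j) x^{y_j}⟩ = f_α · ∑_{j=1}^m M_j(x) log(M_{j+1}(x)/M_j(x)), where M_j(x) = (x/α)^{y_j}. -/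
/-!
On the complex-balanced cycle every monomial flux factors through the constant flow:
`k_j x^{y_j} = k_j α^{y_j} (x/α)^{y_j} = f_α M_j(x)`. Pairing `log (x/α)` with the reaction
vectors `y_{j+1} - y_j` then turns each term into `log M_{j+1} - log M_j`, since
`log M_j = ⟨y_j, log (x/α)⟩`.
-/

open Finset

theorem Real.log_prod_pow {S : Type*} [Fintype S] {z : S → ℝ} (hz : ∀ i, z i ≠ 0) (n : S → ℕ) :
    Real.log (∏ i, z i ^ n i) = ∑ i, (n i : ℝ) * Real.log (z i) := by
  rw [Real.log_prod fun i _ => pow_ne_zero _ (hz i)]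
  simp only [Real.log_pow]

theorem prod_pow_eq_prod_pow_mul_prod_div_pow {S : Type*} [Fintype S] {α : S → ℝ}
    (hα : ∀ i, α i ≠ 0) (x : S → ℝ) (n : S → ℕ) :
    ∏ i, x i ^ n i = (∏ i, α i ^ n i) * ∏ i, (x i / α i) ^ n i := by
  rw [← prod_mul_distrib]
  exact prod_congr rfl fun i _ => by rw [← mul_pow, mul_div_cancel₀ _ (hα i)]

theorem sum_mul_sum_mul_sub_eq_sum_mul_sub {S ι : Type*} [Fintype S] [Fintype ι]
    (L : S → ℝ) (c : ι → ℝ) (Y : ι → S → ℝ) (σ : ι → ι) :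
    ∑ i, L i * ∑ j, c j * (Y (σ j) i - Y j i) =
      ∑ j, c j * (∑ i, Y (σ j) i * L i - ∑ i, Y j i * L i) := by
  simp_rw [mul_sum, ← sum_sub_distrib, mul_sum]
  rw [sum_comm]
  exact sum_congr rfl fun j _ => sum_congr rfl fun i _ => by ring

theorem stmt_13_general {S : Type*} [Fintype S]
    (m : ℕ) [NeZero m]
    (y : Fin m → (S → ℕ))
    (k : Fin m → ℝ)
    (α : S → ℝ) (hα : ∀ i, 0 < α i)
    (fα : ℝ) (hfα : ∀ j, k j * ∏ i, α i ^ y j i = fα)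
    (x : S → ℝ) (hx : ∀ i, 0 < x i)
    (M : Fin m → ℝ) (hM : ∀ j, M j = ∏ i, (x i / α i) ^ y j i) :
    (∑ i, Real.log (x i / α i) *
        (∑ j, k j * ((y (j + 1) i : ℝ) - (y j i : ℝ)) * ∏ s, x s ^ y j s)) =
      fα * ∑ j, M j * Real.log (M (j + 1) / M j) := by
  have hratio : ∀ i, x i / α i ≠ 0 := fun i => (div_pos (hx i) (hα i)).ne'
  have hM_ne : ∀ j, M j ≠ 0 := fun j => by
    rw [hM]
    exact prod_ne_zero_iff.2 fun i _ => pow_ne_zero _ (hratio i)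
  have hlogM : ∀ j, Real.log (M j) = ∑ i, (y j i : ℝ) * Real.log (x i / α i) := fun j => by
    rw [hM, Real.log_prod_pow hratio]
  have hflux : ∀ j, k j * ∏ s, x s ^ y j s = fα * M j := fun j => by
    rw [prod_pow_eq_prod_pow_mul_prod_div_pow (fun i => (hα i).ne'), ← mul_assoc, hfα, hM]
  simp_rw [fun j i => mul_right_comm (k j) ((y (j + 1) i : ℝ) - y j i), hflux]
  rw [sum_mul_sum_mul_sub_eq_sum_mul_sub _ _ (fun j i => (y j i : ℝ)) (· + 1), mul_sum]
  refine sum_congr rfl fun j _ => ?_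
  rw [Real.log_div (hM_ne _) (hM_ne _), hlogM, hlogM, mul_assoc]

theorem stmt_13 {S : Type*} [Fintype S]
    (m : ℕ) [NeZero m]
    (y : Fin m → (S → ℕ))
    (k : Fin m → ℝ) (hk : ∀ j, 0 < k j)
    (α : S → ℝ) (hα : ∀ i, 0 < α i)
    (fα : ℝ) (hfα : ∀ j, k j * ∏ i, α i ^ y j i = fα)
    (x : S → ℝ) (hx : ∀ i, 0 < x i)
    (M : Fin m → ℝ) (hM : ∀ j, M j = ∏ i, (x i / α i) ^ y j i) :
    (∑ i, Real.log (x i / α i) *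
        (∑ j, k j * ((y (j + 1) i : ℝ) - (y j i : ℝ)) * ∏ s, x s ^ y j s)) =
      fα * ∑ j, M j * Real.log (M (j + 1) / M j) :=
  stmt_13_general m y k α hα fα hfα x hx M hM
end
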